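/- arXiv:2304.12635 — 7 statements merged into one kernel-verified Lean document; each statement's English description precedes it below -/
import Mathlib

section
/- Let θ satisfy constraints (C1)–(C3). Then f(·; θ) is monotonic on K-bit points: for all p, q : Fin d → ℕ with p^(i) < 2^K and q^(i) < 2^K for every i, if p ≼ q (i.e. p^(i) ≤ q^(i) for all i) then f(p; θ) ≤ f(q; θ). -/
/-!
Write θ⁽ⁱ⁾ⱼ = 2 ^ eᵢ(j) with eᵢ strictly monotone. The value Σⱼ 2 ^ eᵢ(j) · bitⱼ(x) is the binary
number whose set bits are the image under eᵢ of the set of bits of x. For finsets of naturals,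
comparing binary numbers is comparing in colex order, and strictly monotone maps preserve colex
order; so for x, y < 2 ^ K the coordinate map is an order embedding (take eᵢ = id to recover x).
-/

open Finset

namespace Nat

def finBitIndices (K x : ℕ) : Finset (Fin K) := {j | x.testBit j}

theorem sum_two_pow_mul_testBit_eq {K : ℕ} {e : Fin K → ℕ} (he : Function.Injective e) (x : ℕ) :
    ∑ j, 2 ^ e j * (x.testBit j).toNat = ∑ k ∈ (finBitIndices K x).image e, 2 ^ k := by
  rw [sum_image he.injOn, finBitIndices, sum_filter]
  refine sum_congr rfl fun j _ => ?_
  cases x.testBit j <;> simp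

theorem image_val_finBitIndices {K x : ℕ} (hx : x < 2 ^ K) :
    (finBitIndices K x).image Fin.val = x.bitIndices.toFinset := by
  ext k
  simp only [finBitIndices, mem_image, mem_filter, mem_univ, true_and, List.mem_toFinset,
    mem_bitIndices]
  refine ⟨fun ⟨j, hj, hjk⟩ => hjk ▸ hj, fun hk => ⟨⟨k, ?_⟩, hk, rfl⟩⟩
  exact (Nat.pow_lt_pow_iff_right one_lt_two).mp ((Nat.ge_two_pow_of_testBit hk).trans_lt hx)

theorem sum_two_pow_mul_testBit_le_iff {K : ℕ} {e : Fin K → ℕ} (he : StrictMono e) {x y : ℕ}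
    (hx : x < 2 ^ K) (hy : y < 2 ^ K) :
    ∑ j, 2 ^ e j * (x.testBit j).toNat ≤ ∑ j, 2 ^ e j * (y.testBit j).toNat ↔ x ≤ y := by
  rw [sum_two_pow_mul_testBit_eq he.injective, sum_two_pow_mul_testBit_eq he.injective,
    geomSum_le_geomSum_iff_toColex_le_toColex le_rfl, Colex.toColex_image_le_toColex_image he,
    ← Colex.toColex_image_le_toColex_image Fin.val_strictMono,
    ← geomSum_le_geomSum_iff_toColex_le_toColex le_rfl, image_val_finBitIndices hx,
    image_val_finBitIndices hy, sum_toFinset_bitIndices_two_pow, sum_toFinset_bitIndices_two_pow]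

end Nat

theorem parameterized_sfc_monotonic_general (d K : ℕ)
    (θ : Fin d → Fin K → ℕ)
    (hC1 : ∀ i j, ∃ l, l < K * d ∧ θ i j = 2 ^ l)
    (hC3 : ∀ i, StrictMono (θ i))
    (p q : Fin d → ℕ)
    (hq : ∀ i, q i < 2 ^ K)
    (hpq : ∀ i, p i ≤ q i) :
    (∑ i : Fin d, ∑ j : Fin K, θ i j * ((p i).testBit j).toNat) ≤
      ∑ i : Fin d, ∑ j : Fin K, θ i j * ((q i).testBit j).toNat := by
  choose e _ hθ using hC1
  refine sum_le_sum fun i _ => ?_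
  have he : StrictMono (e i) := fun j j' hjj' =>
    (Nat.pow_lt_pow_iff_right one_lt_two).mp (by simpa only [hθ] using hC3 i hjj')
  simp only [hθ]
  exact (Nat.sum_two_pow_mul_testBit_le_iff he ((hpq i).trans_lt (hq i)) (hq i)).mpr (hpq i)

/-- Under constraints (C1)–(C3), the parameterized SFC
`f(x; θ) = Σᵢ Σⱼ θ⁽ⁱ⁾ⱼ · bitⱼ(x⁽ⁱ⁾)` is monotonic on K-bit points. -/
theorem parameterized_sfc_monotonic (d K : ℕ) (hd : 1 ≤ d) (hK : 1 ≤ K)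
    (θ : Fin d → Fin K → ℕ)
    (hC1 : ∀ i j, ∃ l, l < K * d ∧ θ i j = 2 ^ l)
    (hC2 : Function.Injective fun p : Fin d × Fin K => θ p.1 p.2)
    (hC3 : ∀ i, StrictMono (θ i))
    (p q : Fin d → ℕ)
    (hp : ∀ i, p i < 2 ^ K) (hq : ∀ i, q i < 2 ^ K)
    (hpq : ∀ i, p i ≤ q i) :
    (∑ i : Fin d, ∑ j : Fin K, θ i j * ((p i).testBit j).toNat) ≤
      ∑ i : Fin d, ∑ j : Fin K, θ i j * ((q i).testBit j).toNat :=
  parameterized_sfc_monotonic_general d K θ hC1 hC3 p q hq hpq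
end

section
/- Let θ satisfy constraints (C1) and (C2). Then f(·; θ) is a bijection from the set of K-bit points {x : Fin d → ℕ | x^(i) < 2^K for every i} onto the set of z-addresses {0, 1, …, 2^{Kd} − 1}. -/
/-!
By (C1) and (C2) the exponents of the `θ^(i)_j` are `Kd` distinct numbers below `Kd`, so they
form a bijection `e` from the index pairs `(i, j)` onto the bit positions `0, …, Kd - 1`. Hence
`f(x; θ)` is the number whose bit `e(i, j)` is bit `j` of `x^(i)`: the map is a permutation of
bits, inverted by reading bit `e(i, j)` of `y` back into bit `j` of the `i`-th coordinate.
-/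

open Set

section BinaryEquiv

variable {ι : Type*} {n : ℕ}

def binaryEquiv (e : ι ≃ Fin n) : (ι → Bool) ≃ Fin (2 ^ n) :=
  (e.arrowCongr finTwoEquiv.symm).trans finFunctionFinEquiv

theorem binaryEquiv_symm_apply (e : ι ≃ Fin n) (y : Fin (2 ^ n)) (i : ι) :
    (binaryEquiv e).symm y i = (y : ℕ).testBit (e i) := by
  have hdigit : ∀ c : Fin 2, finTwoEquiv c = decide ((c : ℕ) = 1) := by decide
  rw [Nat.testBit_eq_decide_div_mod_eq, ← finFunctionFinEquiv_symm_apply_val, ← hdigit]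
  rfl

variable [Fintype ι]

theorem val_binaryEquiv (e : ι ≃ Fin n) (b : ι → Bool) :
    (binaryEquiv e b : ℕ) = ∑ i, 2 ^ (e i : ℕ) * (b i).toNat := by
  have hdigit : ∀ c : Bool, ((finTwoEquiv.symm c : Fin 2) : ℕ) = c.toNat := by
    intro c; cases c <;> rfl
  rw [binaryEquiv, Equiv.trans_apply, finFunctionFinEquiv_apply, ← e.sum_comp]
  simp [Equiv.arrowCongr_apply, hdigit, mul_comm]

theorem sum_two_pow_mul_toNat_lt (e : ι ≃ Fin n) (b : ι → Bool) :
    ∑ i, 2 ^ (e i : ℕ) * (b i).toNat < 2 ^ n :=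
  val_binaryEquiv e b ▸ (binaryEquiv e b).isLt

theorem testBit_sum_two_pow_mul_toNat (e : ι ≃ Fin n) (b : ι → Bool) (i : ι) :
    (∑ i, 2 ^ (e i : ℕ) * (b i).toNat).testBit (e i) = b i := by
  rw [← val_binaryEquiv, ← binaryEquiv_symm_apply, Equiv.symm_apply_apply]

theorem sum_two_pow_mul_toNat_testBit (e : ι ≃ Fin n) {y : ℕ} (hy : y < 2 ^ n) :
    ∑ i, 2 ^ (e i : ℕ) * (y.testBit (e i)).toNat = y := by
  have h := congrArg Fin.val ((binaryEquiv e).apply_symm_apply ⟨y, hy⟩)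
  rwa [val_binaryEquiv, funext (binaryEquiv_symm_apply e _)] at h

end BinaryEquiv

theorem exists_equiv_fin_of_injective_two_pow {ι : Type*} [Fintype ι] {n : ℕ} (w : ι → ℕ)
    (hw : ∀ i, ∃ l < n, w i = 2 ^ l) (hinj : Function.Injective w)
    (hcard : Fintype.card ι = n) : ∃ e : ι ≃ Fin n, ∀ i, w i = 2 ^ (e i : ℕ) := by
  choose l hl hwl using hw
  have hl_inj : Function.Injective fun i => (⟨l i, hl i⟩ : Fin n) := by
    intro i j hij
    apply hinj
    rw [hwl, hwl, show l i = l j from congrArg Fin.val hij]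
  have hl_bij := (Fintype.bijective_iff_injective_and_card _).2 ⟨hl_inj, by simp [hcard]⟩
  exact ⟨Equiv.ofBijective _ hl_bij, hwl⟩

theorem parameterized_sfc_bijective_general (d K : ℕ)
    (θ : Fin d → Fin K → ℕ)
    (hC1 : ∀ i j, ∃ l, l < K * d ∧ θ i j = 2 ^ l)
    (hC2 : Function.Injective fun p : Fin d × Fin K => θ p.1 p.2) :
    Set.BijOn (fun x : Fin d → ℕ => ∑ i : Fin d, ∑ j : Fin K, θ i j * ((x i).testBit j).toNat)
      {x : Fin d → ℕ | ∀ i, x i < 2 ^ K} {y : ℕ | y < 2 ^ (K * d)} := by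
  obtain ⟨e, he⟩ := exists_equiv_fin_of_injective_two_pow _
    (fun p : Fin d × Fin K => hC1 p.1 p.2) hC2 (by simp [Nat.mul_comm])
  have hf : (fun x : Fin d → ℕ => ∑ i : Fin d, ∑ j : Fin K, θ i j * ((x i).testBit j).toNat) =
      fun x => ∑ p, 2 ^ (e p : ℕ) * ((x p.1).testBit p.2).toNat := by
    funext x
    simp only [Fintype.sum_prod_type, ← he]
  rw [hf]
  have hbits : ∀ x : Fin d → ℕ, ∀ i j,
      (∑ p, 2 ^ (e p : ℕ) * ((x p.1).testBit p.2).toNat).testBit (e (i, j)) = (x i).testBit j :=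
    fun x i j => testBit_sum_two_pow_mul_toNat e (fun p => (x p.1).testBit p.2) (i, j)
  let g : ℕ → Fin d → ℕ := fun y i => ∑ j : Fin K, 2 ^ (j : ℕ) * (y.testBit (e (i, j))).toNat
  have hg : ∀ y i (j : Fin K), (g y i).testBit j = y.testBit (e (i, j)) := fun y i j =>
    testBit_sum_two_pow_mul_toNat (Equiv.refl _) (fun j => y.testBit (e (i, j))) j
  refine InvOn.bijOn (f' := g) ⟨fun x hx => ?_, fun y hy => ?_⟩ (fun x _ => ?_) (fun y _ i => ?_)
  · funext i
    simp only [g, hbits]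
    exact sum_two_pow_mul_toNat_testBit (Equiv.refl _) (hx i)
  · simp only [hg]
    exact sum_two_pow_mul_toNat_testBit e hy
  · exact sum_two_pow_mul_toNat_lt e _
  · exact sum_two_pow_mul_toNat_lt (Equiv.refl _) _

/-- Under constraints (C1) and (C2), the parameterized SFC
`f(·; θ)` is a bijection from the K-bit points onto `{0, …, 2^{Kd} − 1}`. -/
theorem parameterized_sfc_bijective (d K : ℕ) (hd : 1 ≤ d) (hK : 1 ≤ K)
    (θ : Fin d → Fin K → ℕ)
    (hC1 : ∀ i j, ∃ l, l < K * d ∧ θ i j = 2 ^ l)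
    (hC2 : Function.Injective fun p : Fin d × Fin K => θ p.1 p.2) :
    Set.BijOn (fun x : Fin d → ℕ => ∑ i : Fin d, ∑ j : Fin K, θ i j * ((x i).testBit j).toNat)
      {x : Fin d → ℕ | ∀ i, x i < 2 ^ K} {y : ℕ | y < 2 ^ (K * d)} :=
  parameterized_sfc_bijective_general d K θ hC1 hC2
end

section
/- For all d ≥ 1 and K ≥ 1, the number of bijections σ : Fin d × Fin K ≃ Fin (d·K) such that for every i ∈ Fin d the map j ↦ σ(i, j) is strictly increasing is at least (d!)^K. -/
/-!
Fill the positions `0, …, d·K - 1` in `K` consecutive blocks of length `d`, the `j`-th block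
holding the entries `σ (·, j)` in an arbitrary order `π j ∈ Perm (Fin d)`. Every column then
increases, since block `j` lies entirely below block `j + 1`, and distinct families `π` give
distinct `σ`; this yields `(d!)^K` monotone bijections.
-/

open Function

lemma finProdFinEquiv_lt_of_fst_lt {m n : ℕ} {x y : Fin m × Fin n} (h : x.1 < y.1) :
    finProdFinEquiv x < finProdFinEquiv y := by
  rw [Fin.lt_def, finProdFinEquiv_apply_val, finProdFinEquiv_apply_val]
  have hx : (x.2 : ℕ) < n := x.2.isLt
  have hxy : (x.1 : ℕ) + 1 ≤ y.1 := h
  nlinarith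

namespace MonotoneSFC

variable {d K : ℕ}

/-- The bijection placing `(i, j)` at position `d * j + π j i`. -/
def blockEquiv (π : Fin K → Equiv.Perm (Fin d)) : Fin d × Fin K ≃ Fin (d * K) :=
  (Equiv.prodComm _ _).trans <|
    (Equiv.prodShear (Equiv.refl _) π).trans <|
      finProdFinEquiv.trans (finCongr (Nat.mul_comm K d))

lemma blockEquiv_apply (π : Fin K → Equiv.Perm (Fin d)) (i : Fin d) (j : Fin K) :
    blockEquiv π (i, j) = finCongr (Nat.mul_comm K d) (finProdFinEquiv (j, π j i)) :=
  rfl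

lemma strictMono_blockEquiv (π : Fin K → Equiv.Perm (Fin d)) (i : Fin d) :
    StrictMono fun j => blockEquiv π (i, j) := fun j₁ j₂ h => by
  simpa only [blockEquiv_apply, finCongr_apply, Fin.cast_lt_cast] using
    finProdFinEquiv_lt_of_fst_lt (x := (j₁, π j₁ i)) (y := (j₂, π j₂ i)) h

lemma blockEquiv_injective : Injective (blockEquiv (d := d) (K := K)) := by
  intro π₁ π₂ h
  funext j
  refine Equiv.ext fun i => ?_
  have hij := congrArg (· (i, j)) h
  simpa only [blockEquiv_apply, EquivLike.apply_eq_iff_eq, Prod.mk.injEq, true_and] using hij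

end MonotoneSFC

open MonotoneSFC in
theorem num_monotonic_sfcs_ge_general (d K : ℕ) :
    (Nat.factorial d) ^ K ≤
      Nat.card {σ : Fin d × Fin K ≃ Fin (d * K) //
        ∀ i : Fin d, StrictMono fun j : Fin K => σ (i, j)} := by
  calc d.factorial ^ K = Nat.card (Fin K → Equiv.Perm (Fin d)) := by
        simp [Nat.card_eq_fintype_card, Fintype.card_perm]
    _ ≤ _ := Nat.card_le_card_of_injective (fun π => ⟨blockEquiv π, strictMono_blockEquiv π⟩)
        fun _ _ h => blockEquiv_injective (congrArg Subtype.val h)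

/-- The number of monotonic SFCs, i.e. bijections
`σ : Fin d × Fin K ≃ Fin (d·K)` which are strictly increasing in `j` for each
dimension `i`, is at least `(d!)^K`. -/
theorem num_monotonic_sfcs_ge (d K : ℕ) (hd : 1 ≤ d) (hK : 1 ≤ K) :
    (Nat.factorial d) ^ K ≤
      Nat.card {σ : Fin d × Fin K ≃ Fin (d * K) //
        ∀ i : Fin d, StrictMono fun j : Fin K => σ (i, j)} :=
  num_monotonic_sfcs_ge_general d K
end

section
/- Let K ≥ 1 and let θ_0 < θ_1 < ⋯ < θ_{K−1} be natural numbers, each a power of two. For a split value v ≥ 1 define the split gain G(v) = Σ_{j=0}^{K−1} θ_j·bit_j(v) − Σ_{j=0}^{K−1} θ_j·bit_j(v−1) (an integer). Let a < b < 2^K be naturals, let l = ⌊log₂(a XOR b)⌋ be the position of the most significant bit in which a and b differ, and let v* = (b >> l) << l (b with its l lowest bits cleared). Then v* is a valid split value, i.e. a < v* ≤ b, and v* maximizes the split gain among all valid split values: for every v with a < v ≤ b, G(v) ≤ G(v*). -/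
/-- The split gain `G(v) = Σ_j θ_j·bit_j(v) − Σ_j θ_j·bit_j(v−1)` (an integer). -/
def splitGain (K : ℕ) (θ : ℕ → ℕ) (v : ℕ) : ℤ :=
  (∑ j ∈ Finset.range K, (θ j : ℤ) * ((v.testBit j).toNat : ℤ)) -
    ∑ j ∈ Finset.range K, (θ j : ℤ) * (((v - 1).testBit j).toNat : ℤ)

/-!
If the lowest set bit of `v` is bit `t`, then `v - 1` differs from `v` exactly in bits `0, …, t`, so
`G(v) = θ_t - Σ_{j<t} θ_j`. Distinct increasing powers of two at least double at every step, hence this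
quantity is nondecreasing in `t`. Since `a` and `b` agree above bit `l`, no multiple of `2^(l+1)` lies in
`(a, b]`, so every valid split value has lowest set bit at most `l`; and `v*` has lowest set bit
exactly `l`, because `b` has bit `l` set.
-/

open Finset

def lowBitGain (θ : ℕ → ℕ) (t : ℕ) : ℤ :=
  θ t - ∑ j ∈ range t, (θ j : ℤ)

namespace Nat

theorem shiftRight_eq_shiftRight_iff_xor_lt {a b n : ℕ} : a >>> n = b >>> n ↔ a ^^^ b < 2 ^ n := by
  rw [← xor_eq_zero_iff, ← shiftRight_xor_distrib, shiftRight_eq_div_pow,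
    Nat.div_eq_zero_iff_lt (Nat.two_pow_pos n)]

theorem not_dvd_of_div_eq_div {n a b v : ℕ} (h : a / n = b / n) (hav : a < v) (hvb : v ≤ b) :
    ¬ n ∣ v := by
  rintro ⟨w, rfl⟩
  rcases n.eq_zero_or_pos with rfl | hn
  · omega
  have hlo : a / n < w := (Nat.div_lt_iff_lt_mul hn).mpr (by rwa [mul_comm])
  have hhi : w ≤ b / n := (Nat.le_div_iff_mul_le hn).mpr (by rwa [mul_comm])
  omega

theorem div_two_pow_log_xor_succ (a b : ℕ) :
    a / 2 ^ (log 2 (a ^^^ b) + 1) = b / 2 ^ (log 2 (a ^^^ b) + 1) := by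
  simpa only [shiftRight_eq_div_pow] using
    shiftRight_eq_shiftRight_iff_xor_lt.mpr (lt_pow_succ_log_self one_lt_two _)

theorem div_two_pow_log_xor_ne {a b : ℕ} (h : a ≠ b) :
    a / 2 ^ log 2 (a ^^^ b) ≠ b / 2 ^ log 2 (a ^^^ b) := by
  simpa only [shiftRight_eq_div_pow, not_lt] using
    shiftRight_eq_shiftRight_iff_xor_lt.not.mpr (pow_log_le_self 2 (by simpa using h)).not_gt

theorem div_two_pow_log_xor_lt_and_odd {a b : ℕ} (hab : a < b) :
    a / 2 ^ log 2 (a ^^^ b) < b / 2 ^ log 2 (a ^^^ b) ∧ b / 2 ^ log 2 (a ^^^ b) % 2 = 1 := by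
  have hhigh := div_two_pow_log_xor_succ a b
  have hne := div_two_pow_log_xor_ne hab.ne
  have hle := Nat.div_le_div_right (c := 2 ^ log 2 (a ^^^ b)) hab.le
  rw [pow_succ, ← Nat.div_div_eq_div_mul, ← Nat.div_div_eq_div_mul] at hhigh
  omega

theorem toNat_testBit_two_pow_mul_sub_toNat_testBit_pred {t m : ℕ} (hm : m % 2 = 1) (j : ℕ) :
    (((2 ^ t * m).testBit j).toNat : ℤ) - ((2 ^ t * m - 1).testBit j).toNat =
      if j = t then 1 else if j < t then -1 else 0 := by
  have hpred : 2 ^ t * m - 1 = 2 ^ t * (m - 1) + (2 ^ t - 1) := by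
    obtain ⟨k, rfl⟩ : ∃ k, m = k + 1 := ⟨m - 1, by omega⟩
    have := Nat.two_pow_pos t
    rw [mul_add_one, Nat.add_sub_cancel]
    omega
  rw [testBit_two_pow_mul, hpred, testBit_two_pow_mul_add _ (by simp), testBit_two_pow_sub_one]
  rcases lt_trichotomy j t with h | rfl | h
  · simp [h, h.ne, not_le.mpr h]
  · have : (m - 1) % 2 = 0 := by omega
    simp [hm, this]
  · obtain ⟨i, rfl⟩ : ∃ i, j = t + i + 1 := ⟨j - t - 1, by omega⟩
    have : m / 2 = (m - 1) / 2 := by omega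
    simp [show t + i + 1 - t = i + 1 by omega, h.le, h.ne', h.not_gt, testBit_add_one, this]

end Nat

theorem splitGain_two_pow_mul_of_odd {K t m : ℕ} (θ : ℕ → ℕ) (hm : m % 2 = 1) (ht : t < K) :
    splitGain K θ (2 ^ t * m) = lowBitGain θ t := by
  rw [splitGain, ← sum_sub_distrib]
  simp only [← mul_sub, Nat.toNat_testBit_two_pow_mul_sub_toNat_testBit_pred hm, mul_ite, mul_neg,
    mul_one, mul_zero]
  have hbelow : ∑ j ∈ range t, (if j = t then (θ j : ℤ) else if j < t then -(θ j : ℤ) else 0) =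
      -∑ j ∈ range t, (θ j : ℤ) := by
    rw [← sum_neg_distrib]
    exact sum_congr rfl fun j hj => by simp [(mem_range.mp hj).ne, mem_range.mp hj]
  have habove : ∑ j ∈ Ico (t + 1) K,
      (if j = t then (θ j : ℤ) else if j < t then -(θ j : ℤ) else 0) = 0 :=
    sum_eq_zero fun j hj => by
      have := (mem_Ico.mp hj).1
      simp [show j ≠ t by omega, show ¬j < t by omega]
  rw [← sum_range_add_sum_Ico _ ht, sum_range_succ, hbelow, habove, lowBitGain]
  simp [neg_add_eq_sub]

theorem two_mul_le_succ_of_pow_two_of_strictMono {K : ℕ} {θ : ℕ → ℕ}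
    (hpow : ∀ j < K, ∃ l, θ j = 2 ^ l) (hmono : ∀ j j', j < j' → j' < K → θ j < θ j')
    (j : ℕ) (hj : j + 1 < K) : 2 * θ j ≤ θ (j + 1) := by
  obtain ⟨p, hp⟩ := hpow j (by omega)
  obtain ⟨q, hq⟩ := hpow (j + 1) hj
  have hlt := hmono j (j + 1) (by omega) hj
  rw [hp, hq] at hlt ⊢
  rw [← pow_succ']
  exact Nat.pow_le_pow_right two_pos ((Nat.pow_lt_pow_iff_right one_lt_two).mp hlt)

theorem lowBitGain_le_lowBitGain {K : ℕ} {θ : ℕ → ℕ}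
    (hdouble : ∀ j, j + 1 < K → 2 * θ j ≤ θ (j + 1)) {t t' : ℕ} (htt' : t ≤ t') (ht' : t' < K) :
    lowBitGain θ t ≤ lowBitGain θ t' := by
  induction t', htt' using Nat.le_induction with
  | base => exact le_rfl
  | succ n _ ih =>
    have hn : (2 : ℤ) * θ n ≤ θ (n + 1) := by exact_mod_cast hdouble n ht'
    have hstep : lowBitGain θ n ≤ lowBitGain θ (n + 1) := by
      rw [lowBitGain, lowBitGain, sum_range_succ]
      linarith
    exact (ih (by omega)).trans hstep

theorem optimal_one_split_general (K : ℕ) (θ : ℕ → ℕ)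
    (hpow : ∀ j < K, ∃ l, θ j = 2 ^ l)
    (hmono : ∀ j j', j < j' → j' < K → θ j < θ j')
    (a b : ℕ) (hab : a < b) (hb : b < 2 ^ K) :
    a < (b >>> Nat.log 2 (a ^^^ b)) <<< Nat.log 2 (a ^^^ b) ∧
    (b >>> Nat.log 2 (a ^^^ b)) <<< Nat.log 2 (a ^^^ b) ≤ b ∧
    ∀ v, a < v → v ≤ b →
      splitGain K θ v ≤
        splitGain K θ ((b >>> Nat.log 2 (a ^^^ b)) <<< Nat.log 2 (a ^^^ b)) := by
  set l := Nat.log 2 (a ^^^ b)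
  have hlK : l < K :=
    Nat.log_lt_of_lt_pow (by simpa using hab.ne) (Nat.xor_lt_two_pow (hab.trans hb) hb)
  obtain ⟨hlt, hodd⟩ := Nat.div_two_pow_log_xor_lt_and_odd hab
  have hvstar : (b >>> l) <<< l = 2 ^ l * (b / 2 ^ l) := by
    rw [Nat.shiftLeft_eq, Nat.shiftRight_eq_div_pow, mul_comm]
  refine ⟨?_, ?_, fun v hav hvb => ?_⟩
  · rw [hvstar, mul_comm]
    exact (Nat.div_lt_iff_lt_mul (Nat.two_pow_pos l)).mp hlt
  · rw [hvstar]
    exact Nat.mul_div_le b _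
  obtain ⟨t, m, hm, rfl⟩ := Nat.exists_eq_pow_mul_and_not_dvd (by omega : v ≠ 0) 2 (by norm_num)
  have htl : t ≤ l := le_of_not_gt fun h => Nat.not_dvd_of_div_eq_div
    (Nat.div_two_pow_log_xor_succ a b) hav hvb (dvd_mul_of_dvd_left (pow_dvd_pow 2 h) m)
  rw [hvstar, splitGain_two_pow_mul_of_odd θ (by omega) (htl.trans_lt hlK),
    splitGain_two_pow_mul_of_odd θ hodd hlK]
  exact lowBitGain_le_lowBitGain (two_mul_le_succ_of_pow_two_of_strictMono hpow hmono) htl hlK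

/-- For weights `θ_0 < θ_1 < ⋯ < θ_{K−1}` that are powers of two, and
`a < b < 2^K`, the value `v* = (b >> l) << l` with `l = ⌊log₂(a XOR b)⌋` is a valid
split value (`a < v* ≤ b`) and maximizes the split gain among all valid split values. -/
theorem optimal_one_split (K : ℕ) (hK : 1 ≤ K) (θ : ℕ → ℕ)
    (hpow : ∀ j < K, ∃ l, θ j = 2 ^ l)
    (hmono : ∀ j j', j < j' → j' < K → θ j < θ j')
    (a b : ℕ) (hab : a < b) (hb : b < 2 ^ K) :
    a < (b >>> Nat.log 2 (a ^^^ b)) <<< Nat.log 2 (a ^^^ b) ∧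
    (b >>> Nat.log 2 (a ^^^ b)) <<< Nat.log 2 (a ^^^ b) ≤ b ∧
    ∀ v, a < v → v ≤ b →
      splitGain K θ v ≤
        splitGain K θ ((b >>> Nat.log 2 (a ^^^ b)) <<< Nat.log 2 (a ^^^ b)) :=
  optimal_one_split_general K θ hpow hmono a b hab hb
end

section
/- Let a < b be natural numbers and let l = ⌊log₂(a XOR b)⌋. Then every natural number v with a < v ≤ b satisfies ν(v) ≤ l, where ν(v) is the 2-adic valuation of v (the number of trailing zero bits of v). Moreover, the split value v* = (b >> l) << l satisfies ν(v*) = l. -/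
/-!
Let `l` be the top bit of `a ^^^ b`. Then `a` and `b` agree above bit `l`, and since `a < b`,
bit `l` is set in `b` but not in `a`. A multiple of `2 ^ (l + 1)` below `b` is therefore already
below `a`, so no `v ∈ (a, b]` has more than `l` trailing zeros, while `b` with its low `l` bits
cleared keeps bit `l` and so has exactly `l` of them.
-/

namespace Nat

theorem testBit_eq_of_log_xor_lt {a b j : ℕ} (hj : Nat.log 2 (a ^^^ b) < j) :
    a.testBit j = b.testBit j := by
  have hxor : (a ^^^ b).testBit j = false :=
    testBit_lt_two_pow (lt_pow_of_log_lt one_lt_two hj)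
  simpa [testBit_xor] using hxor

theorem testBit_log_xor_of_lt {a b : ℕ} (hab : a < b) :
    b.testBit (Nat.log 2 (a ^^^ b)) = true := by
  have hxor : (a ^^^ b).testBit (Nat.log 2 (a ^^^ b)) = true := by
    rw [← log2_eq_log_two]
    exact testBit_log2 (xor_eq_zero_iff.not.2 hab.ne)
  by_contra hb
  have hb : b.testBit (Nat.log 2 (a ^^^ b)) = false := by simpa using hb
  have ha : a.testBit (Nat.log 2 (a ^^^ b)) = true := by simpa [testBit_xor, hb] using hxor
  exact (lt_of_testBit _ hb ha fun j hj => (testBit_eq_of_log_xor_lt hj).symm).not_gt hab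

theorem shiftRight_log_xor_succ_eq (a b : ℕ) :
    a >>> (Nat.log 2 (a ^^^ b) + 1) = b >>> (Nat.log 2 (a ^^^ b) + 1) :=
  eq_of_testBit_eq fun i => by
    simp only [testBit_shiftRight]
    exact testBit_eq_of_log_xor_lt (by omega)

theorem le_of_dvd_of_le_of_div_eq {a b k v : ℕ} (hkv : k ∣ v) (hvb : v ≤ b)
    (hdiv : b / k = a / k) : v ≤ a :=
  calc v = v / k * k := (Nat.div_mul_cancel hkv).symm
    _ ≤ b / k * k := Nat.mul_le_mul_right k (Nat.div_le_div_right hvb)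
    _ = a / k * k := by rw [hdiv]
    _ ≤ a := div_mul_le_self a k

end Nat

theorem padicValNat_two_shiftRight_shiftLeft {b l : ℕ} (hb : b.testBit l = true) :
    padicValNat 2 ((b >>> l) <<< l) = l := by
  have hodd : (b >>> l) % 2 = 1 := by
    have h0 : (b >>> l).testBit 0 = true := by rwa [Nat.testBit_shiftRight]
    rwa [Nat.testBit_zero, decide_eq_true_eq] at h0
  rw [Nat.shiftLeft_eq, padicValNat.mul (by omega) (by positivity),
    padicValNat.eq_zero_of_not_dvd (by omega), padicValNat.prime_pow, zero_add]

/-- For `a < b` and `l = ⌊log₂(a XOR b)⌋`, every `v` with `a < v ≤ b`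
has 2-adic valuation at most `l`, and the split value `v* = (b >> l) << l`
attains `ν(v*) = l`. -/
theorem split_value_trailing_zeros (a b : ℕ) (hab : a < b) :
    (∀ v, a < v → v ≤ b → padicValNat 2 v ≤ Nat.log 2 (a ^^^ b)) ∧
    padicValNat 2 ((b >>> Nat.log 2 (a ^^^ b)) <<< Nat.log 2 (a ^^^ b)) =
      Nat.log 2 (a ^^^ b) := by
  set l := Nat.log 2 (a ^^^ b)
  refine ⟨fun v hav hvb => ?_,
    padicValNat_two_shiftRight_shiftLeft (Nat.testBit_log_xor_of_lt hab)⟩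
  by_contra! hv
  have hdvd : 2 ^ (l + 1) ∣ v := (padicValNat_dvd_iff_le (by omega)).2 hv
  have hprefix : b / 2 ^ (l + 1) = a / 2 ^ (l + 1) := by
    simpa only [Nat.shiftRight_eq_div_pow] using (Nat.shiftRight_log_xor_succ_eq a b).symm
  exact (Nat.le_of_dvd_of_le_of_div_eq hdvd hvb hprefix).not_gt hav
end

section
/- Let d ≥ 1 and K ≥ 1, and define the d-dimensional K-bit Morton (z-order) code Z(x) = Σ_{i=0}^{d−1} Σ_{j=0}^{K−1} 2^{j·d+i}·bit_j(x^(i)) for points x : Fin d → ℕ. Then Z is a bijection from the set of K-bit points {x | x^(i) < 2^K for every i} onto {0,…,2^{Kd}−1}, and Z is monotonic with respect to the pointwise order: if p^(i) ≤ q^(i) for all i (with all coordinates < 2^K), then Z(p) ≤ Z(q). -/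
/-!
Bit `j` of `x i` lands at position `j * d + i`, so `mortonCode d K` is, on K-bit points, the
composite of equivalences `(Fin d → Fin (2^K)) ≃ (Fin d → Fin K → Fin 2) ≃ (Fin K → Fin d → Fin 2)
≃ (Fin K → Fin (2^d)) ≃ Fin (2^(K*d))`: binary digits of each coordinate, transpose, then read
the bits of level `j` as the `j`-th digit in base `2^d`.

For monotonicity write `mortonCode d K x = ∑ i, 2^i * bitSpread (2^d) K (x i)`, where
`bitSpread b K m` re-reads the low `K` binary digits of `m` in base `b`; on `[0, 2^K)` this is
strictly increasing as soon as `b ≥ 2`.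
-/

/-- The d-dimensional K-bit Morton (z-order) code:
`Z(x) = Σ_i Σ_j 2^{j·d+i} · bit_j(x⁽ⁱ⁾)`. -/
def mortonCode (d K : ℕ) (x : Fin d → ℕ) : ℕ :=
  ∑ i : Fin d, ∑ j : Fin K, 2 ^ ((j : ℕ) * d + (i : ℕ)) * ((x i).testBit j).toNat

def bitSpread (b K m : ℕ) : ℕ := ∑ j : Fin K, b ^ (j : ℕ) * (m.testBit j).toNat

lemma bitSpread_succ (b K m : ℕ) :
    bitSpread b (K + 1) m = m % 2 + b * bitSpread b K (m / 2) := by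
  simp only [bitSpread, Fin.sum_univ_succ, Finset.mul_sum, Fin.val_zero, Fin.val_succ,
    Nat.testBit_succ, Nat.toNat_testBit m 0]
  congr 1
  · simp
  · exact Finset.sum_congr rfl fun j _ => by ring

lemma bitSpread_strictMonoOn {b : ℕ} (hb : 2 ≤ b) (K : ℕ) :
    StrictMonoOn (bitSpread b K) (Set.Iio (2 ^ K)) := by
  induction K with
  | zero => simp [StrictMonoOn]
  | succ K ih =>
    intro m hm m' hm' hlt
    simp only [Set.mem_Iio, pow_succ] at hm hm'
    rw [bitSpread_succ, bitSpread_succ]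
    rcases (Nat.div_le_div_right (c := 2) hlt.le).lt_or_eq with hhigh | hhigh
    · have hspread := ih (Set.mem_Iio.2 (by omega)) (Set.mem_Iio.2 (by omega)) hhigh
      calc m % 2 + b * bitSpread b K (m / 2) < b * (bitSpread b K (m / 2) + 1) := by
            rw [mul_add]; omega
        _ ≤ b * bitSpread b K (m' / 2) := Nat.mul_le_mul_left b hspread
        _ ≤ m' % 2 + b * bitSpread b K (m' / 2) := Nat.le_add_left _ _
    · rw [hhigh]
      omega

lemma mortonCode_eq_sum_bitSpread (d K : ℕ) (x : Fin d → ℕ) :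
    mortonCode d K x = ∑ i : Fin d, 2 ^ (i : ℕ) * bitSpread (2 ^ d) K (x i) := by
  simp only [mortonCode, bitSpread, Finset.mul_sum]
  refine Finset.sum_congr rfl fun i _ => Finset.sum_congr rfl fun j _ => ?_
  ring

lemma mortonCode_le_mortonCode {d K : ℕ} (hd : 1 ≤ d) {p q : Fin d → ℕ}
    (hq : ∀ i, q i < 2 ^ K) (hpq : ∀ i, p i ≤ q i) : mortonCode d K p ≤ mortonCode d K q := by
  have hb : 2 ≤ 2 ^ d := by simpa using Nat.pow_le_pow_right two_pos hd
  rw [mortonCode_eq_sum_bitSpread, mortonCode_eq_sum_bitSpread]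
  gcongr with i
  exact (bitSpread_strictMonoOn hb K).monotoneOn ((hpq i).trans_lt (hq i)) (hq i) (hpq i)

lemma bijOn_of_comp_val_eq_equiv {ι : Type*} {n m : ℕ} (f : (ι → ℕ) → ℕ)
    (e : (ι → Fin n) ≃ Fin m) (he : ∀ v, f (fun i => v i) = e v) :
    Set.BijOn f {x | ∀ i, x i < n} {y | y < m} := by
  have hf : ∀ x (hx : ∀ i, x i < n), f x = e (fun i => ⟨x i, hx i⟩) :=
    fun x hx => he (fun i => ⟨x i, hx i⟩)
  refine ⟨fun x hx => ?_, fun x hx x' hx' h => ?_, fun y hy => ?_⟩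
  · rw [Set.mem_ofPred_eq, hf x hx]
    exact (e _).isLt
  · have hfin := e.injective (Fin.ext ((hf x hx).symm.trans (h.trans (hf x' hx'))))
    funext i
    exact congrArg Fin.val (congrFun hfin i)
  · exact ⟨fun i => e.symm ⟨y, hy⟩ i, fun i => (e.symm _ i).isLt, by simp [he]⟩

def mortonEquiv (d K : ℕ) : (Fin d → Fin (2 ^ K)) ≃ Fin (2 ^ (K * d)) :=
  (Equiv.piCongrRight fun _ => finFunctionFinEquiv.symm).trans <|
    (Equiv.piComm _).trans <|
      (Equiv.piCongrRight fun _ => finFunctionFinEquiv).trans <|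
        finFunctionFinEquiv.trans (finCongr (by rw [← pow_mul, mul_comm]))

lemma mortonCode_val_eq_mortonEquiv (d K : ℕ) (x : Fin d → Fin (2 ^ K)) :
    mortonCode d K (fun i => x i) = mortonEquiv d K x := by
  simp only [mortonCode, Nat.toNat_testBit, mortonEquiv, Equiv.trans_apply, finCongr_apply,
    Fin.val_cast, finFunctionFinEquiv_apply_val, Equiv.piCongrRight_apply, Pi.map_apply,
    Equiv.piComm_apply, Function.swap, finFunctionFinEquiv_symm_apply_val, Finset.sum_mul]
  rw [Finset.sum_comm]
  refine Finset.sum_congr rfl fun j _ => Finset.sum_congr rfl fun i _ => ?_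
  ring

theorem morton_bijective_and_monotone_general (d K : ℕ) (hd : 1 ≤ d) :
    Set.BijOn (mortonCode d K) {x : Fin d → ℕ | ∀ i, x i < 2 ^ K}
      {y : ℕ | y < 2 ^ (K * d)} ∧
    ∀ p q : Fin d → ℕ, (∀ i, p i < 2 ^ K) → (∀ i, q i < 2 ^ K) →
      (∀ i, p i ≤ q i) → mortonCode d K p ≤ mortonCode d K q :=
  ⟨bijOn_of_comp_val_eq_equiv _ _ (mortonCode_val_eq_mortonEquiv d K),
    fun _ _ _ hq hpq => mortonCode_le_mortonCode hd hq hpq⟩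

/-- The Morton code is a bijection from the K-bit points onto
`{0, …, 2^{Kd} − 1}` and is monotonic with respect to the pointwise order. -/
theorem morton_bijective_and_monotone (d K : ℕ) (hd : 1 ≤ d) (hK : 1 ≤ K) :
    Set.BijOn (mortonCode d K) {x : Fin d → ℕ | ∀ i, x i < 2 ^ K}
      {y : ℕ | y < 2 ^ (K * d)} ∧
    ∀ p q : Fin d → ℕ, (∀ i, p i < 2 ^ K) → (∀ i, q i < 2 ^ K) →
      (∀ i, p i ≤ q i) → mortonCode d K p ≤ mortonCode d K q :=
  morton_bijective_and_monotone_general d K hd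
end

section
/- Let n ≥ 1 items be given, let 1 ≤ m ≤ M be the minimum and maximum block sizes, and let S : ℕ × ℕ → ℝ assign a score S(i, j) to each block (i, j] with 0 ≤ i < j ≤ n. Define OPT : {0,…,n} → ℝ by OPT(0) = 0; OPT(i) = S(0, i) for 0 < i < m; and OPT(i) = min{ OPT(i − s) + S(i − s, i) : m ≤ s ≤ min(M, i) } for m ≤ i ≤ n. Then at least one feasible paging of the n items exists, and OPT(n) equals the minimum, over all feasible pagings 0 = i_0 < i_1 < ⋯ < i_k = n, of the total cost Σ_{t=1}^{k} S(i_{t−1}, i_t); that is, the dynamic program computes the cost of an optimal cost-based paging. -/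
/-!
Every feasible paging of `i` items either consists of a single block `(0, i]`, or is a feasible
paging of some `j < i` followed by a last block `(j, i]` of size `i - j ∈ [m, M]`; conversely,
a single block of size at most `M`, or such a last block appended to any feasible paging of `j`,
is feasible. Hence the optimal costs satisfy exactly the recurrence defining `OPT`, and
`OPT i` is the optimal cost by strong induction on `i`.
-/

/-- A feasible paging of items `1..n` with min block size `m` and max block size `M`:
cut points `0 = cut 0 < cut 1 < ⋯ < cut k = n` where every block except possibly the
first has size in `[m, M]`, and the first block has size in `[1, M]`. -/
structure Paging (n m M : ℕ) where
  k : ℕ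
  hk : 1 ≤ k
  cut : ℕ → ℕ
  h0 : cut 0 = 0
  hn : cut k = n
  hlt : ∀ t, t < k → cut t < cut (t + 1)
  hfirst : cut 1 - cut 0 ≤ M
  hrest : ∀ t, 1 ≤ t → t < k → m ≤ cut (t + 1) - cut t ∧ cut (t + 1) - cut t ≤ M

/-- The total cost of a paging: the sum of the scores of its blocks. -/
def Paging.cost {n m M : ℕ} (p : Paging n m M) (S : ℕ → ℕ → ℝ) : ℝ :=
  ∑ t ∈ Finset.range p.k, S (p.cut t) (p.cut (t + 1))

namespace Paging

variable {n m M : ℕ}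

lemma cut_le_cut (p : Paging n m M) {a b : ℕ} (hab : a ≤ b) (hb : b ≤ p.k) :
    p.cut a ≤ p.cut b := by
  induction b, hab using Nat.le_induction with
  | base => exact le_rfl
  | succ b _ ih => exact (ih (by omega)).trans (p.hlt b (by omega)).le

lemma pos (p : Paging n m M) : 0 < n := by
  have h01 := p.hlt 0 p.hk
  have h1k := p.cut_le_cut p.hk le_rfl
  rw [p.h0, zero_add] at h01
  rw [p.hn] at h1k
  omega

def single (hn : 1 ≤ n) (hnM : n ≤ M) : Paging n m M where
  k := 1
  hk := le_rfl
  cut t := if t = 0 then 0 else n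
  h0 := rfl
  hn := rfl
  hlt t ht := by
    obtain rfl : t = 0 := by omega
    simp only [↓reduceIte, Nat.add_one_ne_zero]
    omega
  hfirst := by simpa using hnM
  hrest t _ _ := by omega

@[simp]
lemma single_cost (hn : 1 ≤ n) (hnM : n ≤ M) (S : ℕ → ℕ → ℝ) :
    (single (m := m) hn hnM).cost S = S 0 n := by
  simp [cost, single]

def snoc {j : ℕ} (p : Paging j m M) (i : ℕ) (hji : j < i) (hm : m ≤ i - j) (hM : i - j ≤ M) :
    Paging i m M where
  k := p.k + 1
  hk := by omega
  cut t := if t ≤ p.k then p.cut t else i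
  h0 := by simp [p.h0]
  hn := by simp
  hlt t ht := by
    rcases Nat.lt_or_eq_of_le (Nat.lt_succ_iff.mp ht) with h | rfl
    · simpa [h.le, Nat.succ_le_of_lt h] using p.hlt t h
    · simpa [p.hn] using hji
  hfirst := by simpa [p.hk] using p.hfirst
  hrest t h1 ht := by
    rcases Nat.lt_or_eq_of_le (Nat.lt_succ_iff.mp ht) with h | rfl
    · simpa [h.le, Nat.succ_le_of_lt h] using p.hrest t h1 h
    · simp only [le_refl, if_true, show ¬ p.k + 1 ≤ p.k by omega, if_false, p.hn]
      exact ⟨hm, hM⟩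

@[simp]
lemma snoc_cost {j : ℕ} (p : Paging j m M) (i : ℕ) (hji : j < i) (hm : m ≤ i - j)
    (hM : i - j ≤ M) (S : ℕ → ℕ → ℝ) :
    (p.snoc i hji hm hM).cost S = p.cost S + S j i := by
  simp only [cost, snoc, Finset.sum_range_succ, le_refl, if_true,
    show ¬ p.k + 1 ≤ p.k by omega, if_false, p.hn]
  congr 1
  refine Finset.sum_congr rfl fun t ht => ?_
  rw [Finset.mem_range] at ht
  rw [if_pos ht.le, if_pos (by omega : t + 1 ≤ p.k)]

def dropLast (p : Paging n m M) (hk : 2 ≤ p.k) : Paging (p.cut (p.k - 1)) m M where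
  k := p.k - 1
  hk := by omega
  cut := p.cut
  h0 := p.h0
  hn := rfl
  hlt t ht := p.hlt t (by omega)
  hfirst := p.hfirst
  hrest t h1 ht := p.hrest t h1 (by omega)

lemma cost_eq_dropLast_cost_add (p : Paging n m M) (hk : 2 ≤ p.k) (S : ℕ → ℕ → ℝ) :
    p.cost S = (p.dropLast hk).cost S + S (p.cut (p.k - 1)) n := by
  have hsucc : p.k - 1 + 1 = p.k := by omega
  conv_lhs => rw [cost, ← hsucc, Finset.sum_range_succ, hsucc, p.hn]
  rfl

lemma eq_single_or_snoc (p : Paging n m M) (S : ℕ → ℕ → ℝ) :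
    (n ≤ M ∧ p.cost S = S 0 n) ∨
      ∃ j, ∃ q : Paging j m M, j < n ∧ m ≤ n - j ∧ n - j ≤ M ∧ p.cost S = q.cost S + S j n := by
  by_cases hk : p.k = 1
  · have hcut1 : p.cut 1 = n := hk ▸ p.hn
    have hfirst := p.hfirst
    rw [p.h0, hcut1] at hfirst
    refine .inl ⟨by omega, ?_⟩
    simp only [cost, hk, Finset.sum_range_one, p.h0, zero_add, hcut1]
  · have hk2 : 2 ≤ p.k := by have := p.hk; omega
    have hsucc : p.k - 1 + 1 = p.k := by omega
    have hlast := p.hlt (p.k - 1) (by omega)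
    have hrest := p.hrest (p.k - 1) (by omega) (by omega)
    rw [hsucc, p.hn] at hlast hrest
    exact .inr ⟨_, p.dropLast hk2, hlast, hrest.1, hrest.2, p.cost_eq_dropLast_cost_add hk2 S⟩

end Paging

def pagingCosts (n m M : ℕ) (S : ℕ → ℕ → ℝ) : Set ℝ :=
  {c : ℝ | ∃ p : Paging n m M, c = p.cost S}

lemma isLeast_pagingCosts_of_lt {i m M : ℕ} (hi : 1 ≤ i) (him : i < m) (hmM : m ≤ M)
    (S : ℕ → ℕ → ℝ) : IsLeast (pagingCosts i m M S) (S 0 i) := by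
  refine ⟨⟨Paging.single hi (by omega), by simp⟩, ?_⟩
  rintro _ ⟨p, rfl⟩
  rcases p.eq_single_or_snoc S with ⟨-, hcost⟩ | ⟨j, -, -, hm, -, -⟩
  · exact hcost.ge
  · omega

lemma isLeast_pagingCosts_of_le {i m M : ℕ} (hm : 1 ≤ m) (hmM : m ≤ M) (hmi : m ≤ i)
    (S : ℕ → ℕ → ℝ) (f : ℕ → ℝ) (hf0 : f 0 = 0)
    (hf : ∀ j, 1 ≤ j → j < i → IsLeast (pagingCosts j m M S) (f j)) :
    IsLeast (pagingCosts i m M S)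
      ((Finset.Icc m (min M i)).inf' (Finset.nonempty_Icc.mpr (le_min hmM hmi))
        fun s => f (i - s) + S (i - s) i) := by
  constructor
  · obtain ⟨s, hs, hmin⟩ := Finset.exists_mem_eq_inf' (Finset.nonempty_Icc.mpr (le_min hmM hmi))
      fun s => f (i - s) + S (i - s) i
    rw [Finset.mem_Icc, le_min_iff] at hs
    rw [hmin]
    rcases Nat.lt_or_eq_of_le hs.2.2 with hsi | rfl
    · obtain ⟨q, hq⟩ := (hf (i - s) (by omega) (by omega)).1
      exact ⟨q.snoc i (by omega) (by omega) (by omega), by simp [hq]⟩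
    · exact ⟨Paging.single (by omega) hs.2.1, by simp [hf0]⟩
  · rintro _ ⟨p, rfl⟩
    rcases p.eq_single_or_snoc S with ⟨hiM, hcost⟩ | ⟨j, q, hji, hjm, hjM, hcost⟩
    · have hle := Finset.inf'_le (fun s => f (i - s) + S (i - s) i)
        (Finset.mem_Icc.mpr ⟨hmi, le_min hiM le_rfl⟩)
      rw [hcost]
      simpa only [Nat.sub_self, hf0, zero_add] using hle
    · have hle := Finset.inf'_le (fun s => f (i - s) + S (i - s) i)
        (Finset.mem_Icc.mpr ⟨hjm, le_min hjM (Nat.sub_le i j)⟩)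
      have hqj := (hf j q.pos hji).2 ⟨q, rfl⟩
      rw [Nat.sub_sub_self hji.le] at hle
      rw [hcost]
      linarith

/-- correctness of the dynamic programming paging algorithm.
If `OPT` satisfies the DP recurrence (`OPT 0 = 0`; `OPT i = S 0 i` for `0 < i < m`;
`OPT i = min_{m ≤ s ≤ min M i} (OPT (i−s) + S (i−s) i)` for `m ≤ i ≤ n`),
then a feasible paging exists and `OPT n` is the least total cost over all
feasible pagings. -/
theorem dp_paging_optimal (n m M : ℕ) (hn : 1 ≤ n) (hm : 1 ≤ m) (hmM : m ≤ M)
    (S : ℕ → ℕ → ℝ) (OPT : ℕ → ℝ)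
    (h0 : OPT 0 = 0)
    (hsmall : ∀ i, 0 < i → i < m → OPT i = S 0 i)
    (hrec : ∀ i (hmi : m ≤ i), i ≤ n →
      OPT i = Finset.inf' (Finset.Icc m (min M i))
        (Finset.nonempty_Icc.mpr (le_min hmM hmi))
        (fun s => OPT (i - s) + S (i - s) i)) :
    Nonempty (Paging n m M) ∧
    IsLeast {c : ℝ | ∃ p : Paging n m M, c = p.cost S} (OPT n) := by
  have hopt : ∀ i, 1 ≤ i → i ≤ n → IsLeast (pagingCosts i m M S) (OPT i) := by
    intro i
    induction i using Nat.strong_induction_on with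
    | _ i ih =>
      intro hi hin
      by_cases him : i < m
      · rw [hsmall i hi him]
        exact isLeast_pagingCosts_of_lt hi him hmM S
      · rw [hrec i (by omega) hin]
        exact isLeast_pagingCosts_of_le hm hmM (not_lt.mp him) S OPT h0
          fun j hj hji => ih j hji hj (by omega)
  have hleast := hopt n hn le_rfl
  obtain ⟨p, -⟩ := hleast.1
  exact ⟨⟨p⟩, hleast⟩
end
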